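/- Let 0 < |q| < 1 and define δ(x,z) := Φ(xz)Φ(q(xz)^{-1}) / (Φ(x)Φ(qx^{-1})Φ(z)Φ(qz^{-1})) for nonzero complex x, z. Let m, n be positive integers, σ : {1,…,n} → {1,…,m}, let a_1,…,a_n, ħ and ζ_1,…,ζ_{m-1} be nonzero complex numbers, set d_l := #{j : σ(j) ≤ l} and ℒ_l := ħ^{(l−m)d_l}·∏_{j: σ(j)≤l} a_j, and define δ_f := ∏_{l=1}^{m-1} δ(ℒ_l, ζ_l). Then for every i ∈ {1,…,n}, replacing a_i by q a_i multiplies δ_f by ∏_{l=σ(i)}^{m-1} ζ_l^{-1}, i.e. δ_f(a_1,…,q a_i,…,a_n) = (∏_{l=σ(i)}^{m-1} ζ_l^{-1}) · δ_f(a_1,…,a_n), whenever both sides are defined. -/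

import Mathlib

/-!
`Φ(x) = (1 - x) Φ(qx)` makes `θ(x) := Φ(x) Φ(q/x)` quasi-periodic, `θ(qx) = -x⁻¹ θ(x)`, and
`δ(x,z) = θ(xz) / (θ(x) θ(z))`, so `δ(qx,z) = z⁻¹ δ(x,z)`. Multiplying `a_i` by `q` multiplies
`ℒ_l` by `q` exactly when `σ(i) ≤ l` and leaves it unchanged otherwise.
-/

/-- `Φ(x) = ∏_{i≥0} (1 - x qⁱ)`. -/
noncomputable def Phi (q x : ℂ) : ℂ := ∏' i : ℕ, (1 - x * q ^ i)

/-- `δ(x,z) = Φ(xz)Φ(q(xz)⁻¹) / (Φ(x)Φ(qx⁻¹)Φ(z)Φ(qz⁻¹))`. -/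
noncomputable def deltaFn (q x z : ℂ) : ℂ :=
  Phi q (x * z) * Phi q (q * (x * z)⁻¹) /
    (Phi q x * Phi q (q * x⁻¹) * Phi q z * Phi q (q * z⁻¹))

/-- `ℒ_l = ħ^{(l-m)d_l} ∏_{j : σ(j) ≤ l} a_j` where `d_l = #{j : σ(j) ≤ l}`, the restriction
of the determinant of the `l`-th tautological bundle.  Indices are zero-based: the
argument `l ∈ {0,…,m-2}` corresponds to the paper's `l+1`, and `σ j` to `σ(j) = (σ j)+1`. -/
noncomputable def Ldet {m n : ℕ} (h : ℂ) (σ : Fin n → Fin m) (a : Fin n → ℂ) (l : ℕ) : ℂ :=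
  h ^ ((((l : ℤ) + 1) - (m : ℤ)) * ((Finset.univ.filter fun j => (σ j : ℕ) ≤ l).card : ℤ)) *
    ∏ j ∈ Finset.univ.filter (fun j => (σ j : ℕ) ≤ l), a j

/-- `δ_f = ∏_{l=1}^{m-1} δ(ℒ_l, ζ_l)` (zero-based indices). -/
noncomputable def deltaF {m n : ℕ} (q h : ℂ) (σ : Fin n → Fin m) (ζ : ℕ → ℂ)
    (a : Fin n → ℂ) : ℂ :=
  ∏ l ∈ Finset.range (m - 1), deltaFn q (Ldet h σ a l) (ζ l)

open Finset

section QPochhammer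

variable {q : ℂ}

theorem multipliable_one_sub_mul_pow (x : ℂ) (hq : ‖q‖ < 1) :
    Multipliable fun i : ℕ => 1 - x * q ^ i := by
  have hsum : Summable fun i : ℕ => ‖-(x * q ^ i)‖ := by
    simpa using (summable_geometric_of_lt_one (norm_nonneg q) hq).mul_left ‖x‖
  simpa [sub_eq_add_neg] using multipliable_one_add_of_summable hsum

theorem Phi_eq_one_sub_mul_Phi_mul (x : ℂ) (hq : ‖q‖ < 1) :
    Phi q x = (1 - x) * Phi q (q * x) := by
  have hshift : Multipliable fun i : ℕ => 1 - x * q ^ (i + 1) :=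
    (multipliable_one_sub_mul_pow (q * x) hq).congr fun i => by ring
  rw [Phi, tprod_eq_zero_mul' (f := fun i => 1 - x * q ^ i) hshift, Phi, pow_zero, mul_one]
  exact congrArg _ (tprod_congr fun i => by ring)

/-- `theta q x = -x^{1/2} ϑ(x)` for the paper's odd theta function `ϑ`. -/
noncomputable def theta (q x : ℂ) : ℂ := Phi q x * Phi q (q * x⁻¹)

theorem theta_q_mul (hq0 : q ≠ 0) (hq : ‖q‖ < 1) {x : ℂ} (hx : x ≠ 0) :
    theta q (q * x) = -x⁻¹ * theta q x := by
  have hinv : q * (q * x)⁻¹ = x⁻¹ := by field_simp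
  rw [theta, theta, hinv, Phi_eq_one_sub_mul_Phi_mul x⁻¹ hq, Phi_eq_one_sub_mul_Phi_mul x hq]
  field_simp
  ring

theorem deltaFn_eq_theta_div (x z : ℂ) :
    deltaFn q x z = theta q (x * z) / (theta q x * theta q z) := by
  simp only [deltaFn, theta, mul_assoc]

theorem deltaFn_q_mul_left (hq0 : q ≠ 0) (hq : ‖q‖ < 1) {x z : ℂ} (hx : x ≠ 0)
    (hz : z ≠ 0) : deltaFn q (q * x) z = z⁻¹ * deltaFn q x z := by
  rw [deltaFn_eq_theta_div, deltaFn_eq_theta_div, mul_assoc,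
    theta_q_mul hq0 hq (mul_ne_zero hx hz), theta_q_mul hq0 hq hx]
  field_simp

end QPochhammer

section Ldet

variable {m n : ℕ} {h : ℂ} {σ : Fin n → Fin m} {a : Fin n → ℂ} {i : Fin n} {l : ℕ}

theorem Ldet_ne_zero (hh0 : h ≠ 0) (ha : ∀ j, a j ≠ 0) (l : ℕ) : Ldet h σ a l ≠ 0 :=
  mul_ne_zero (zpow_ne_zero _ hh0) (prod_ne_zero_iff.2 fun j _ => ha j)

theorem Ldet_update_of_lt (c : ℂ) (hl : l < σ i) :
    Ldet h σ (Function.update a i c) l = Ldet h σ a l := by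
  unfold Ldet
  congr 1
  refine prod_congr rfl fun j hj => Function.update_of_ne ?_ c a
  rintro rfl
  exact absurd (mem_filter.1 hj).2 (Nat.not_le.2 hl)

theorem Ldet_update_mul_of_le (c : ℂ) (hl : (σ i : ℕ) ≤ l) :
    Ldet h σ (Function.update a i (c * a i)) l = c * Ldet h σ a l := by
  have hi : i ∈ univ.filter fun j => (σ j : ℕ) ≤ l := by simp [hl]
  rw [Ldet, Ldet, prod_update_of_mem hi, ← erase_eq, ← mul_prod_erase _ a hi]
  ring

end Ldet

theorem deltaF_qshift_general {m n : ℕ} (σ : Fin n → Fin m)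
    (q h : ℂ) (a : Fin n → ℂ) (ζ : ℕ → ℂ) (i : Fin n)
    (hq0 : q ≠ 0) (hh0 : h ≠ 0) (ha : ∀ j, a j ≠ 0) (hζ : ∀ l < m - 1, ζ l ≠ 0)
    (hq2 : ‖q‖ < 1) :
    deltaF q h σ ζ (Function.update a i (q * a i)) =
      (∏ l ∈ Finset.Ico ((σ i : ℕ)) (m - 1), (ζ l)⁻¹) * deltaF q h σ ζ a := by
  have hσ : (σ i : ℕ) ≤ m - 1 := Nat.le_sub_one_of_lt (σ i).isLt
  have below : ∀ l ∈ range (σ i : ℕ),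
      deltaFn q (Ldet h σ (Function.update a i (q * a i)) l) (ζ l)
        = deltaFn q (Ldet h σ a l) (ζ l) := fun l hl => by
    rw [Ldet_update_of_lt _ (mem_range.1 hl)]
  have above : ∀ l ∈ Ico (σ i : ℕ) (m - 1),
      deltaFn q (Ldet h σ (Function.update a i (q * a i)) l) (ζ l)
        = (ζ l)⁻¹ * deltaFn q (Ldet h σ a l) (ζ l) := fun l hl => by
    obtain ⟨hil, hlm⟩ := mem_Ico.1 hl
    rw [Ldet_update_mul_of_le _ hil,
      deltaFn_q_mul_left hq0 hq2 (Ldet_ne_zero hh0 ha l) (hζ l hlm)]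
  rw [deltaF, deltaF, ← prod_range_mul_prod_Ico _ hσ, ← prod_range_mul_prod_Ico _ hσ,
    prod_congr rfl below, prod_congr rfl above, prod_mul_distrib]
  ring

/-- Replacing `a_i` by `q a_i` multiplies `δ_f` by `∏_{l=σ(i)}^{m-1} ζ_l⁻¹`. -/
theorem deltaF_qshift {m n : ℕ} (hm : 0 < m) (hn : 0 < n) (σ : Fin n → Fin m)
    (q h : ℂ) (a : Fin n → ℂ) (ζ : ℕ → ℂ) (i : Fin n)
    (hq0 : q ≠ 0) (hh0 : h ≠ 0) (ha : ∀ j, a j ≠ 0) (hζ : ∀ l < m - 1, ζ l ≠ 0)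
    (hq1 : 0 < ‖q‖) (hq2 : ‖q‖ < 1)
    (hdef : ∀ A ∈ ({a, Function.update a i (q * a i)} : Set (Fin n → ℂ)), ∀ l < m - 1,
      Phi q (Ldet h σ A l) ≠ 0 ∧ Phi q (q * (Ldet h σ A l)⁻¹) ≠ 0 ∧
        Phi q (ζ l) ≠ 0 ∧ Phi q (q * (ζ l)⁻¹) ≠ 0) :
    deltaF q h σ ζ (Function.update a i (q * a i)) =
      (∏ l ∈ Finset.Ico ((σ i : ℕ)) (m - 1), (ζ l)⁻¹) * deltaF q h σ ζ a :=
  deltaF_qshift_general σ q h a ζ i hq0 hh0 ha hζ hq2
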